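/- arXiv:math/0301202 — 2 statements merged into one kernel-verified Lean document; each statement's English description precedes it below -/
import Mathlib

section
/- Let R be a commutative ℚ-algebra and B(t) ∈ R[[t]] a power series with zero constant term. Define polynomials p_k(X) ∈ R[X] by Σ_{k≥0} p_k(X) t^k/k! = exp(X·B(t)) in (R[X])[[t]], and let W_B ∈ tR[[t]] be the unique power series with W_B(t·exp(B(t))) = t. Set q₀ = 1 and, for k ≥ 1, let q_k(X) ∈ R[X] be the unique polynomial with (X − k)·q_k(X) = X·p_k(X − k) (such q_k exists since X − k divides X·p_k(X − k), and is unique since X − k is monic, hence a non-zerodivisor). Then in (R[X])[[t]]: Σ_{k≥0} q_k(X) t^k/k! = exp(X·B(W_B(t))); in the paper's notation, Σ_{k≥0} (x·p_k(x−k)/(x−k)) t^k/k! = exp(x·B(W_B(t))). -/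
/-- Substitution (composition) of formal power series: `substPS a f = f(a)`, whose
`n`-th coefficient is `Σ_k (coeff k f) · (coeff n aᵏ)`.  For `a` with zero constant
term this finite sum realises the usual composition of formal power series. -/
noncomputable def substPS {R : Type*} [CommRing R] (a f : PowerSeries R) : PowerSeries R :=
  PowerSeries.mk fun n => ∑ᶠ (k : ℕ), PowerSeries.coeff (R := R) k f * PowerSeries.coeff (R := R) n (a ^ k)

/-!
Write `e_c = exp(c·B)` and `F = t·e_1`, so that `W` is the compositional inverse of `F`.
From `e_c' = c·B'·e_c` one gets `n·[tⁿ] e_c = c·[tⁿ⁻¹] B'·e_c`, that is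
`(c - n)·[tⁿ] (1 + t B')·e_{c-n} = c·[tⁿ] e_{c-n}`. For `c = 0` this says that
`[tⁿ] (1 + t B')·e_{-n}` vanishes for `n > 0`, which is the Lagrange-type formula
`[tⁿ] P = [tⁿ] P(F)·(1 + t B')·e_{-n}`. Applied to `P = exp(c·B(W))`, for which `P(F) = e_c`,
it gives `[tⁿ] exp(c·B(W)) = [tⁿ] (1 + t B')·e_{c-n}`, hence
`(c - n)·[tⁿ] exp(c·B(W)) = c·[tⁿ] e_{c-n}`. For `c = X` the right-hand side is
`X·p_n(X - n)/n!`, and `X - n` is monic, hence cancellable.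
-/

open PowerSeries

section Subst

variable {A : Type*} [CommRing A]

theorem substPS_eq_subst {a : A⟦X⟧} (ha : HasSubst a) (f : A⟦X⟧) :
    substPS a f = f.subst a := by
  ext n
  simp only [substPS, coeff_mk, coeff_subst' ha, smul_eq_mul]

namespace PowerSeries

theorem constantCoeff_map {A' : Type*} [CommRing A'] (φ : A →+* A') (f : A⟦X⟧) :
    constantCoeff (map φ f) = φ (constantCoeff f) := by
  rw [← coeff_zero_eq_constantCoeff_apply, coeff_map, coeff_zero_eq_constantCoeff_apply]

-- `map_subst` is stated with `MvPowerSeries.map`, which `rw` does not match with `PowerSeries.map`.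
theorem map_subst' {A' : Type*} [CommRing A'] {a : A⟦X⟧} (ha : HasSubst a)
    (φ : A →+* A') (f : A⟦X⟧) : map φ (f.subst a) = (map φ f).subst (map φ a) :=
  map_subst ha f

theorem X_pow_dvd_sub_trunc (f : A⟦X⟧) (n : ℕ) : X ^ n ∣ f - (trunc n f : A⟦X⟧) := by
  rw [X_pow_dvd_iff]
  intro m hm
  simp [Polynomial.coeff_coe, coeff_trunc, hm]

theorem coeff_subst_mul {a : A⟦X⟧} (ha : constantCoeff a = 0) (f M : A⟦X⟧) (n : ℕ) :
    coeff n (f.subst a * M) = ∑ k ∈ Finset.range (n + 1), coeff k f * coeff n (a ^ k * M) := by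
  have has : HasSubst a := HasSubst.of_constantCoeff_zero' ha
  obtain ⟨g, hg⟩ := X_pow_dvd_sub_trunc f (n + 1)
  have hf : f.subst a = ∑ k ∈ Finset.range (n + 1), C (coeff k f) * a ^ k
      + a ^ (n + 1) * g.subst a := by
    conv_lhs => rw [← sub_add_cancel f (trunc (n + 1) f : A⟦X⟧), hg, add_comm]
    rw [subst_add has, subst_mul has, subst_pow has, subst_X has, subst_coe has,
      Polynomial.aeval_def, eval₂_trunc_eq_sum_range]
    rfl
  have htail : coeff n (a ^ (n + 1) * g.subst a * M) = 0 := by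
    obtain ⟨c, rfl⟩ := X_dvd_iff.mpr ha
    rw [mul_pow, mul_assoc, mul_assoc, coeff_X_pow_mul', if_neg (by omega)]
  rw [hf, add_mul, map_add, htail, add_zero, Finset.sum_mul, map_sum]
  simp only [mul_assoc, coeff_C_mul]

theorem constantCoeff_subst_of_constantCoeff_zero {a : A⟦X⟧} (ha : constantCoeff a = 0)
    (f : A⟦X⟧) : constantCoeff (f.subst a) = constantCoeff f := by
  simpa using coeff_subst_mul ha f 1 0

end PowerSeries

end Subst

section ExpMul

variable {A : Type*} [CommRing A] [Algebra ℚ A]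

noncomputable def expMul (b : A⟦X⟧) (c : A) : A⟦X⟧ := (exp A).subst (C c * b)

variable {b : A⟦X⟧} (hb : constantCoeff b = 0)
include hb

theorem substPS_exp_eq_expMul (c : A) : substPS (C c * b) (exp A) = expMul b c :=
  substPS_eq_subst (HasSubst.of_constantCoeff_zero' hb).mul_right _

theorem expMul_eq_subst_rescale (c : A) : expMul b c = (rescale c (exp A)).subst b := by
  have hb' : HasSubst b := HasSubst.of_constantCoeff_zero' hb
  rw [rescale_eq_subst, subst_comp_subst_apply (HasSubst.smul_X' c) hb', subst_smul hb',
    subst_X hb', smul_eq_C_mul, expMul]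

theorem expMul_add (c d : A) : expMul b (c + d) = expMul b c * expMul b d := by
  simp only [expMul_eq_subst_rescale hb, ← subst_mul (HasSubst.of_constantCoeff_zero' hb),
    exp_mul_exp_eq_exp_add]

theorem expMul_one_pow (k : ℕ) : expMul b 1 ^ k = expMul b k := by
  rw [expMul_eq_subst_rescale hb, expMul_eq_subst_rescale hb,
    ← subst_pow (HasSubst.of_constantCoeff_zero' hb), rescale_one, RingHom.id_apply,
    exp_pow_eq_rescale_exp]

theorem constantCoeff_expMul (c : A) : constantCoeff (expMul b c) = 1 := by
  rw [expMul, constantCoeff_subst_of_constantCoeff_zero (by simp [hb]), constantCoeff_exp]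

theorem derivative_expMul (c : A) :
    d⁄dX A (expMul b c) = C c * d⁄dX A b * expMul b c := by
  rw [expMul, derivative_subst (HasSubst.of_constantCoeff_zero' hb).mul_right, derivative_exp,
    Derivation.leibniz, derivative_C, smul_zero, add_zero, smul_eq_mul]
  ring

theorem succ_mul_coeff_succ_expMul (c : A) (m : ℕ) :
    (m + 1 : A) * coeff (m + 1) (expMul b c) = c * coeff m (d⁄dX A b * expMul b c) := by
  have h := congrArg (coeff m) (derivative_expMul hb c)
  rw [coeff_derivative, mul_assoc, coeff_C_mul] at h
  linear_combination h

theorem sub_natCast_mul_coeff_expMul_sub_natCast (c : A) (n : ℕ) :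
    (c - n) * coeff n ((1 + X * d⁄dX A b) * expMul b (c - n))
      = c * coeff n (expMul b (c - n)) := by
  cases n with
  | zero => simp [constantCoeff_expMul hb]
  | succ m =>
    have h := succ_mul_coeff_succ_expMul hb (c - (m + 1 : ℕ)) m
    rw [add_mul, one_mul, mul_assoc, map_add, coeff_succ_X_mul]
    push_cast at h ⊢
    linear_combination (-1 : A) * h

theorem coeff_one_add_X_mul_derivative_mul_expMul_neg (n : ℕ) :
    coeff n ((1 + X * d⁄dX A b) * expMul b (-n)) = if n = 0 then 1 else 0 := by
  split_ifs with hn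
  · subst hn
    simp [constantCoeff_expMul hb]
  · have h := sub_natCast_mul_coeff_expMul_sub_natCast hb 0 n
    rw [zero_sub, zero_mul, neg_mul, neg_eq_zero] at h
    have hunit : IsUnit (n : A) := by
      simpa using (Nat.cast_ne_zero.mpr hn : (n : ℚ) ≠ 0).isUnit.map (algebraMap ℚ A)
    exact hunit.mul_right_eq_zero.mp h

theorem coeff_subst_X_mul_expMul_mul (P : A⟦X⟧) (n : ℕ) :
    coeff n (P.subst (X * expMul b 1) * ((1 + X * d⁄dX A b) * expMul b (-n))) = coeff n P := by
  have hterm (k : ℕ) (hk : k ≤ n) :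
      (X * expMul b 1) ^ k * ((1 + X * d⁄dX A b) * expMul b (-n))
        = X ^ k * ((1 + X * d⁄dX A b) * expMul b (-(n - k : ℕ))) := by
    rw [mul_pow, expMul_one_pow hb, Nat.cast_sub hk, neg_sub, sub_eq_add_neg, expMul_add hb]
    ring
  rw [coeff_subst_mul (by simp), Finset.sum_eq_single_of_mem n (by simp)]
  · rw [hterm n le_rfl, coeff_X_pow_mul', if_pos le_rfl,
      coeff_one_add_X_mul_derivative_mul_expMul_neg hb, if_pos (Nat.sub_self n), mul_one]
  · intro k hk hkn
    have hk' : k ≤ n := Nat.lt_succ_iff.mp (Finset.mem_range.mp hk)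
    rw [hterm k hk', coeff_X_pow_mul', if_pos hk',
      coeff_one_add_X_mul_derivative_mul_expMul_neg hb, if_neg (by omega), mul_zero]

theorem expMul_subst {W : A⟦X⟧} (hW : constantCoeff W = 0) (c : A) :
    expMul (b.subst W) c = (expMul b c).subst W := by
  have hW' : HasSubst W := HasSubst.of_constantCoeff_zero' hW
  rw [expMul, expMul, subst_comp_subst_apply (HasSubst.of_constantCoeff_zero' hb).mul_right hW',
    subst_mul hW', subst_C]
  rfl

theorem map_expMul {A' : Type*} [CommRing A'] [Algebra ℚ A'] (φ : A →+* A') (c : A) :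
    map φ (expMul b c) = expMul (map φ b) (φ c) := by
  rw [expMul, expMul, map_subst' (HasSubst.of_constantCoeff_zero' hb).mul_right, map_exp, map_mul,
    map_C]

theorem sub_natCast_mul_coeff_expMul_subst_inverse {W : A⟦X⟧} (hW0 : constantCoeff W = 0)
    (hW : W.subst (X * (exp A).subst b) = X) (c : A) (n : ℕ) :
    (c - n) * coeff n (expMul (b.subst W) c) = c * coeff n (expMul b (c - n)) := by
  have hF : (exp A).subst b = expMul b 1 := by rw [expMul, map_one, one_mul]
  have hcomp : (expMul (b.subst W) c).subst (X * expMul b 1) = expMul b c := by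
    rw [expMul_subst hb hW0, subst_comp_subst_apply (HasSubst.of_constantCoeff_zero' hW0)
      (HasSubst.of_constantCoeff_zero' (by simp)), ← hF, hW, X_subst]
  rw [← coeff_subst_X_mul_expMul_mul hb, hcomp, ← mul_assoc, mul_comm (expMul b c),
    mul_assoc, ← expMul_add hb, ← sub_eq_add_neg,
    sub_natCast_mul_coeff_expMul_sub_natCast hb]

end ExpMul

theorem coeff_expMul_map_C_comp {R : Type*} [CommRing R] [Algebra ℚ R] {B : R⟦X⟧}
    (hB : constantCoeff B = 0) (f g : Polynomial R) (n : ℕ) :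
    coeff n (expMul (map Polynomial.C B) (f.comp g))
      = (coeff n (expMul (map Polynomial.C B) f)).comp g := by
  have hC : (Polynomial.compRingHom g).comp Polynomial.C = Polynomial.C :=
    RingHom.ext fun _ => Polynomial.C_comp
  have h := congrArg (coeff n)
    (map_expMul (b := map Polynomial.C B) (by rw [constantCoeff_map, hB, map_zero])
      (Polynomial.compRingHom g) f)
  rw [coeff_map, ← RingHom.comp_apply (map _), ← map_comp, hC] at h
  exact h.symm

/-- With `p_k` defined by `Σ_k p_k(X)·tᵏ/k! = exp(X·B(t))`, with `W_B` the
unique series with `W_B(t·exp(B(t))) = t`, and with `q_0 = 1` and, for `k ≥ 1`, `q_k`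
the unique polynomial with `(X − k)·q_k(X) = X·p_k(X − k)`, one has
`Σ_k q_k(X)·tᵏ/k! = exp(X·B(W_B(t)))` in `(R[X])[[t]]`. -/
theorem stmt_6 (R : Type*) [CommRing R] [Algebra ℚ R]
    (B : PowerSeries R) (hB0 : PowerSeries.constantCoeff (R := R) B = 0)
    (p : ℕ → Polynomial R)
    (hp : ∀ k : ℕ,
      PowerSeries.coeff (R := Polynomial R) k
        (substPS
          (PowerSeries.C (R := Polynomial R) Polynomial.X * PowerSeries.map Polynomial.C B)
          (PowerSeries.exp (Polynomial R)))
      = (k.factorial : ℚ)⁻¹ • p k)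
    (W : PowerSeries R) (hW0 : PowerSeries.constantCoeff (R := R) W = 0)
    (hW : substPS (PowerSeries.X * substPS B (PowerSeries.exp R)) W = PowerSeries.X)
    (q : ℕ → Polynomial R) (hq0 : q 0 = 1)
    (hq : ∀ k : ℕ, 1 ≤ k →
      (Polynomial.X - Polynomial.C (k : R)) * q k =
        Polynomial.X * (p k).comp (Polynomial.X - Polynomial.C (k : R))) :
    ∀ k : ℕ,
      PowerSeries.coeff (R := Polynomial R) k
        (substPS
          (PowerSeries.C (R := Polynomial R) Polynomial.X *
            PowerSeries.map Polynomial.C (substPS W B))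
          (PowerSeries.exp (Polynomial R)))
      = (k.factorial : ℚ)⁻¹ • q k := by
  have hB : constantCoeff (map Polynomial.C B) = 0 := by rw [constantCoeff_map, hB0, map_zero]
  have hW0' : constantCoeff (map Polynomial.C W) = 0 := by rw [constantCoeff_map, hW0, map_zero]
  have hBW : constantCoeff ((map Polynomial.C B).subst (map Polynomial.C W)) = 0 := by
    rw [constantCoeff_subst_of_constantCoeff_zero hW0', hB]
  have hW' :
      (map Polynomial.C W).subst (X * (exp (Polynomial R)).subst (map Polynomial.C B)) = X := by
    have h := congrArg (map Polynomial.C) hW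
    rwa [substPS_eq_subst (HasSubst.of_constantCoeff_zero' hB0),
      substPS_eq_subst HasSubst.X'.mul_left, map_subst' HasSubst.X'.mul_left, map_mul, map_X,
      map_subst' (HasSubst.of_constantCoeff_zero' hB0), map_exp] at h
  have hshift (n : ℕ) :
      coeff n (expMul (map Polynomial.C B) (Polynomial.X - (n : Polynomial R)))
        = (n.factorial : ℚ)⁻¹ • (p n).comp (Polynomial.X - Polynomial.C (n : R)) := by
    have h := coeff_expMul_map_C_comp hB0 Polynomial.X (Polynomial.X - Polynomial.C (n : R)) n
    rw [Polynomial.X_comp, ← substPS_exp_eq_expMul hB Polynomial.X, hp, Polynomial.smul_comp] at h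
    rwa [← map_natCast Polynomial.C]
  rw [substPS_eq_subst (HasSubst.of_constantCoeff_zero' hW0),
    map_subst' (HasSubst.of_constantCoeff_zero' hW0), substPS_exp_eq_expMul hBW]
  rintro (_ | m)
  · rw [coeff_zero_eq_constantCoeff_apply, constantCoeff_expMul hBW, hq0, Nat.factorial_zero,
      Nat.cast_one, inv_one, one_smul]
  apply (Polynomial.monic_X_sub_C _).isRegular.left
  calc (Polynomial.X - Polynomial.C ((m + 1 : ℕ) : R)) * coeff (m + 1) _
      = Polynomial.X * coeff (m + 1)
          (expMul (map Polynomial.C B) (Polynomial.X - ((m + 1 : ℕ) : Polynomial R))) := by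
        rw [map_natCast]
        exact sub_natCast_mul_coeff_expMul_subst_inverse hB hW0' hW' _ _
    _ = ((m + 1).factorial : ℚ)⁻¹ •
          ((Polynomial.X - Polynomial.C ((m + 1 : ℕ) : R)) * q (m + 1)) := by
        rw [hshift, hq (m + 1) (by omega), mul_smul_comm]
    _ = _ := (mul_smul_comm _ _ _).symm
end

section
/- Let V be a finite set, n ≥ 1, and f : V → Fin n a surjective map, with fibers L_i = f⁻¹(i). A perfect matching of a finite set S is a fixed-point-free involution π : S → S (π∘π = id and π(v) ≠ v for all v). Say two elements l, l' of S are linked by π if f(l) = f(l') or π(l) = l', and say π connects the family of fibers it meets if the equivalence relation generated by linking relates any two elements of S. Then the following map is a bijection: from the set of pairs (𝔉, (π_I)_{I∈𝔉}), where 𝔉 is a partition of Fin n into nonempty blocks and, for each block I ∈ 𝔉, π_I is a perfect matching of f⁻¹(I) = ⋃_{i∈I} L_i that connects the family (L_i)_{i∈I}, to the set of perfect matchings of V, sending (𝔉, (π_I)) to the common extension of the π_I. Equivalently: every perfect matching π of V arises from a unique such pair, namely 𝔉 is the partition of Fin n into the connected components of the graph on Fin n in which i and j are adjacent iff i ≠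 j and there exists v ∈ V with f(v) = i and f(π(v)) = j, and π_I is the restriction of π to f⁻¹(I), which is well defined and connects (L_i)_{i∈I}. -/
/-!
Call `x, y ∈ V` linked if `f x = f y` or `π x = y`. The equivalence on `V` generated by linking
is the pullback along `f` of the component equivalence on the index set: an adjacency `i ~ j`
is witnessed by a matched pair `v, π v`, and conversely a chain of links only ever moves between
equal or adjacent fibres. Surjectivity of `f` is what makes the image of an equivalence on `V`
transitive. Condition (i) says that an admissible setoid contains the component setoid, and
condition (ii), pulled back to `V`, that it is contained in it.
-/

open Relation Function

theorem Relation.EqvGen.of_onFun {α β : Type*} {r : β → β → Prop} {g : α → β} {x y : α}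
    (h : EqvGen (r on g) x y) : EqvGen r (g x) (g y) :=
  Setoid.eqvGen_le (s := (EqvGen.setoid r).comap g) (fun _ _ => EqvGen.rel _ _) h

theorem Relation.EqvGen.subtype_mk {α : Type*} {r : α → α → Prop} {p : α → Prop}
    (hr : ∀ x y, r x y → (p x ↔ p y)) {x y : α} (h : EqvGen r x y) (hx : p x) (hy : p y) :
    EqvGen (r on Subtype.val) (⟨x, hx⟩ : Subtype p) ⟨y, hy⟩ := by
  have hp : ∀ {a b}, EqvGen r a b → p a → p b := fun h =>
    (Setoid.eqvGen_le (s := Setoid.ker p) (fun a b hab => propext (hr a b hab)) h).mp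
  induction h with
  | rel _ _ hab => exact .rel _ _ hab
  | refl => exact .refl _
  | symm _ _ _ ih => exact .symm _ _ (ih hy hx)
  | trans _ _ _ hab _ ih₁ ih₂ =>
    have hb := hp hab hx
    exact .trans _ _ _ (ih₁ hx hb) (ih₂ hb hy)

namespace FiberComponents

variable {V ι : Type*} (f : V → ι) (π : V → V)

def link (x y : V) : Prop := f x = f y ∨ π x = y

def linkSetoid : Setoid V := EqvGen.setoid (link f π)

def componentSetoid : Setoid ι :=
  EqvGen.setoid fun i j => i ≠ j ∧ ∃ v : V, f v = i ∧ f (π v) = j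

variable {f π}

theorem componentSetoid_rel (v : V) : componentSetoid f π (f v) (f (π v)) := by
  by_cases h : f v = f (π v)
  · exact h ▸ (componentSetoid f π).refl _
  · exact EqvGen.rel _ _ ⟨h, v, rfl, rfl⟩

theorem componentSetoid_of_link {x y : V} (h : link f π x y) :
    componentSetoid f π (f x) (f y) := by
  rcases h with h | rfl
  · exact h ▸ (componentSetoid f π).refl _
  · exact componentSetoid_rel x

theorem comap_componentSetoid (hf : Surjective f) :
    (componentSetoid f π).comap f = linkSetoid f π := by
  have hker : Setoid.ker f ≤ linkSetoid f π := fun _ _ h => EqvGen.rel _ _ (Or.inl h)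
  refine le_antisymm (fun l l' h => ?_) (Setoid.eqvGen_le fun _ _ => componentSetoid_of_link)
  have hmap : componentSetoid f π ≤ (linkSetoid f π).mapOfSurjective f hker hf :=
    Setoid.eqvGen_le fun _ _ ⟨_, v, hv, hπv⟩ =>
      ⟨v, π v, EqvGen.rel _ _ (Or.inr rfl), hv, hπv⟩
  obtain ⟨a, b, hab, ha, hb⟩ := hmap h
  exact (linkSetoid f π).trans ((linkSetoid f π).symm (hker ha))
    ((linkSetoid f π).trans hab (hker hb))

theorem componentSetoid_le {s : Setoid ι} (h : ∀ v, s (f v) (f (π v))) :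
    componentSetoid f π ≤ s :=
  Setoid.eqvGen_le fun _ _ ⟨_, v, hv, hπv⟩ => hv ▸ hπv ▸ h v

theorem le_componentSetoid (hf : Surjective f) {s : Setoid ι}
    (h : ∀ i (l l' : {v // s (f v) i}), EqvGen (link f π on Subtype.val) l l') :
    s ≤ componentSetoid f π := by
  intro i j hij
  obtain ⟨l, rfl⟩ := hf i
  obtain ⟨l', rfl⟩ := hf j
  have hll' : linkSetoid f π l l' := (h (f l) ⟨l, s.refl _⟩ ⟨l', s.symm hij⟩).of_onFun
  exact (Setoid.comap_rel f _ l l').1 ((comap_componentSetoid hf).ge hll')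

theorem componentSetoid_connected (hf : Surjective f) (i : ι)
    (l l' : {v // componentSetoid f π (f v) i}) : EqvGen (link f π on Subtype.val) l l' := by
  have hclass : ∀ x y, link f π x y →
      (componentSetoid f π (f x) i ↔ componentSetoid f π (f y) i) := fun _ _ h =>
    ⟨(componentSetoid f π).trans ((componentSetoid f π).symm (componentSetoid_of_link h)),
      (componentSetoid f π).trans (componentSetoid_of_link h)⟩
  have hll' : linkSetoid f π l l' := by
    rw [← comap_componentSetoid hf]
    exact (componentSetoid f π).trans l.2 ((componentSetoid f π).symm l'.2)
  exact EqvGen.subtype_mk hclass hll' l.2 l'.2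

end FiberComponents

open FiberComponents

theorem stmt_8_general {V : Type*} (n : ℕ)
    (f : V → Fin n) (hf : Function.Surjective f)
    (π : V → V) :
    (∃! s : Setoid (Fin n),
      (∀ v : V, s.r (f v) (f (π v))) ∧
      (∀ i : Fin n, ∀ l l' : {v : V // s.r (f v) i},
        Relation.EqvGen
          (fun x y : {v : V // s.r (f v) i} => f x.1 = f y.1 ∨ π x.1 = y.1) l l')) ∧
    (let s₀ : Setoid (Fin n) :=
      Relation.EqvGen.setoid fun i j => i ≠ j ∧ ∃ v : V, f v = i ∧ f (π v) = j
     (∀ v : V, s₀.r (f v) (f (π v))) ∧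
      (∀ i : Fin n, ∀ l l' : {v : V // s₀.r (f v) i},
        Relation.EqvGen
          (fun x y : {v : V // s₀.r (f v) i} => f x.1 = f y.1 ∨ π x.1 = y.1) l l')) :=
  ⟨⟨componentSetoid f π, ⟨componentSetoid_rel, componentSetoid_connected hf⟩,
      fun _ ⟨hmatch, hconn⟩ =>
        le_antisymm (le_componentSetoid hf hconn) (componentSetoid_le hmatch)⟩,
    componentSetoid_rel, componentSetoid_connected hf⟩

/-- Let `f : V → Fin n` be surjective (`V` finite, `n ≥ 1`) and let `π` be
a perfect matching of `V` (a fixed-point-free involution).  Two elements are *linked*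
if they lie in the same fiber of `f` or are matched by `π`.  A pair `(𝔉, (π_I)_{I∈𝔉})`
— a partition `𝔉` of `Fin n` together with, for each block `I`, a perfect matching of
`f⁻¹(I)` connecting the family of fibers `(L_i)_{i∈I}` — whose common extension is `π`
is encoded by the setoid `s` on `Fin n` whose classes are the blocks: the conditions
read (i) `π` maps each `f⁻¹(class)` to itself, and (ii) for each class, any two
elements of its preimage are related by the equivalence relation generated by linking.
The claim is that every perfect matching `π` arises from exactly one such pair: the
setoid generated by the adjacency relation `i ~ j ↔ i ≠ j ∧ ∃ v, f v = i ∧ f (π v) = j`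
satisfies (i) and (ii), and it is the unique setoid doing so. -/
theorem stmt_8 {V : Type*} [Fintype V] (n : ℕ) (hn : 1 ≤ n)
    (f : V → Fin n) (hf : Function.Surjective f)
    (π : V → V) (hinv : ∀ v, π (π v) = v) (hfree : ∀ v, π v ≠ v) :
    (∃! s : Setoid (Fin n),
      (∀ v : V, s.r (f v) (f (π v))) ∧
      (∀ i : Fin n, ∀ l l' : {v : V // s.r (f v) i},
        Relation.EqvGen
          (fun x y : {v : V // s.r (f v) i} => f x.1 = f y.1 ∨ π x.1 = y.1) l l')) ∧
    (let s₀ : Setoid (Fin n) :=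
      Relation.EqvGen.setoid fun i j => i ≠ j ∧ ∃ v : V, f v = i ∧ f (π v) = j
     (∀ v : V, s₀.r (f v) (f (π v))) ∧
      (∀ i : Fin n, ∀ l l' : {v : V // s₀.r (f v) i},
        Relation.EqvGen
          (fun x y : {v : V // s₀.r (f v) i} => f x.1 = f y.1 ∨ π x.1 = y.1) l l')) :=
  stmt_8_general n f hf π
end
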